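/- The Cayley tree function T(z) = Σ_{n≥1} n^{n-1} z^n / n!, which satisfies T(z) = z e^{T(z)}, is not a holonomic function; equivalently, the sequence n^{n-1}/n! (and hence the sequence n^n) is not holonomic. -/

import Mathlib

open Finset

/-- A sequence is holonomic (P-recursive) if it satisfies a linear recurrence
with polynomial coefficients whose leading coefficient is not identically zero. -/
def HolonomicSeq (f : ℕ → ℂ) : Prop :=
  ∃ (d : ℕ) (p : ℕ → Polynomial ℂ), p 0 ≠ 0 ∧
    ∀ n : ℕ, ∑ j ∈ Finset.range (d + 1), (p j).eval (n : ℂ) * f (n + (d - j)) = 0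

/-!
Suppose `∑ⱼ pⱼ(n) f(n + d - j) = 0` for `f n = n ^ (n + c)`. Writing
`(n + k) ^ (n + c) = n ^ (n + c) (1 + k / n) ^ (n + c)` and `x = 1 / n`, the recurrence says that
`G x = ∑ₖ Rₖ(x) (1 + k x) ^ (c + 1 / x)` vanishes at every `x = 1 / n`, where `Rₖ` is the
reversal of the polynomial `p_{d-k}(n) (n + k) ^ k`. The function `G` is analytic on the plane
slit along `(-∞, -1/d]`, which is star-shaped around `0`, so `G = 0` there. At a point
`x₀ ∈ (-1/(d-1), -1/d)` only the top term has a branch cut, and crossing it multiplies that term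
by `exp (2πi (c + 1 / x₀)) ≠ 1`; hence `R_d` vanishes on an interval and `p₀ = 0`. The sequence
`n ^ (n - 1) / n!` is the case `c = -1` after multiplication by `n!`.
-/

open Complex Polynomial Filter Topology

lemma apply_add_eq_prod_Ico_mul {u : ℕ → ℂ} {a : ℂ[X]}
    (hu : ∀ n, u (n + 1) = a.eval (n : ℂ) * u n) (n : ℕ) {k d : ℕ} (hkd : k ≤ d) :
    u (n + d) = (∏ i ∈ Ico k d, a.eval ((n + i : ℕ) : ℂ)) * u (n + k) := by
  induction d, hkd using Nat.le_induction with
  | base => simp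
  | succ d hkd ih => rw [← add_assoc, hu, prod_Ico_succ_top hkd, ih]; ring

namespace HolonomicSeq

variable {f g u : ℕ → ℂ}

theorem of_eventuallyEq (hf : HolonomicSeq f) (hfg : f =ᶠ[atTop] g) : HolonomicSeq g := by
  obtain ⟨d, p, hp0, hrec⟩ := hf
  obtain ⟨N, hN⟩ := eventually_atTop.1 hfg
  let q : ℂ[X] := ∏ i ∈ range N, (X - C (i : ℂ))
  refine ⟨d, fun j => p j * q, mul_ne_zero hp0 ?_, fun n => ?_⟩
  · exact prod_ne_zero_iff.2 fun i _ => X_sub_C_ne_zero _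
  rcases lt_or_ge n N with hn | hn
  · have hq : q.eval (n : ℂ) = 0 := by
      simp only [q, eval_prod, eval_sub, eval_X, eval_C]
      exact prod_eq_zero (mem_range.2 hn) (sub_self _)
    simp [hq]
  · calc ∑ j ∈ range (d + 1), (p j * q).eval (n : ℂ) * g (n + (d - j))
        = q.eval (n : ℂ) * ∑ j ∈ range (d + 1), (p j).eval (n : ℂ) * f (n + (d - j)) := by
          rw [mul_sum]
          refine sum_congr rfl fun j _ => ?_
          rw [eval_mul, hN _ (by omega)]
          ring
      _ = 0 := by rw [hrec, mul_zero]

theorem mul_of_apply_succ (hf : HolonomicSeq f) (a : ℂ[X])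
    (hu : ∀ n, u (n + 1) = a.eval (n : ℂ) * u n) : HolonomicSeq fun n => u n * f n := by
  obtain ⟨d, p, hp0, hrec⟩ := hf
  refine ⟨d, fun j => p j * ∏ i ∈ Ico (d - j) d, a.comp (X + C (i : ℂ)), by simpa using hp0,
    fun n => ?_⟩
  calc ∑ j ∈ range (d + 1), (p j * ∏ i ∈ Ico (d - j) d, a.comp (X + C (i : ℂ))).eval (n : ℂ) *
        (u (n + (d - j)) * f (n + (d - j)))
      = u (n + d) * ∑ j ∈ range (d + 1), (p j).eval (n : ℂ) * f (n + (d - j)) := by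
        rw [mul_sum]
        refine sum_congr rfl fun j _ => ?_
        rw [apply_add_eq_prod_Ico_mul hu n (Nat.sub_le d j)]
        simp only [eval_mul, eval_prod, eval_comp, eval_add, eval_X, eval_C, Nat.cast_add]
        ring
    _ = 0 := by rw [hrec, mul_zero]

end HolonomicSeq

def slitDomain (k : ℕ) : Set ℂ := {x | 1 + k * x ∈ slitPlane}

lemma isOpen_slitDomain (k : ℕ) : IsOpen (slitDomain k) :=
  isOpen_slitPlane.preimage (by fun_prop)

lemma zero_mem_slitDomain (k : ℕ) : 0 ∈ slitDomain k := by
  simp [slitDomain, one_mem_slitPlane]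

lemma starConvex_slitDomain (k : ℕ) : StarConvex ℝ 0 (slitDomain k) := by
  intro x hx a b ha hb hab
  have h := starConvex_one_slitPlane hx ha hb hab
  simp only [slitDomain, Set.mem_ofPred_eq, smul_zero, zero_add, real_smul] at h ⊢
  convert h using 1
  linear_combination (-1 : ℂ) * (by exact_mod_cast hab : (a : ℂ) + b = 1)

lemma isPreconnected_slitDomain (k : ℕ) : IsPreconnected (slitDomain k) :=
  ((starConvex_slitDomain k).isPathConnected (zero_mem_slitDomain k)).isConnected.isPreconnected

lemma antitone_slitDomain : Antitone slitDomain := by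
  intro k d hkd x hx
  rcases Nat.eq_zero_or_pos d with rfl | hd
  · simpa [Nat.le_zero.1 hkd] using hx
  have h := starConvex_slitDomain d hx (a := 1 - k / d) (b := k / d) (by
    rw [sub_nonneg, div_le_one (by positivity)]; exact_mod_cast hkd) (by positivity) (by ring)
  simp only [slitDomain, Set.mem_ofPred_eq, smul_zero, zero_add, real_smul] at h ⊢
  convert h using 2
  have : (d : ℂ) ≠ 0 := by exact_mod_cast hd.ne'
  push_cast
  field_simp

lemma setOf_im_ne_zero_subset_slitDomain {d : ℕ} (hd : d ≠ 0) :
    {x : ℂ | x.im ≠ 0} ⊆ slitDomain d := fun x hx =>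
  mem_slitPlane_iff.2 (Or.inr (by simpa [hd] using hx))

/-- The analytic continuation through `x = 0` of `(1 + k x) ^ (a + 1 / x)`. -/
noncomputable def compoundPow (a : ℂ) (k : ℕ) (x : ℂ) : ℂ :=
  exp (a * log (1 + k * x) + dslope (fun y => log (1 + k * y)) 0 x)

lemma compoundPow_of_ne_zero (a : ℂ) (k : ℕ) {x : ℂ} (hx : x ≠ 0) :
    compoundPow a k x = exp ((a + x⁻¹) * log (1 + k * x)) := by
  rw [compoundPow, dslope_of_ne _ hx, slope_def_field]
  congr 1
  simp only [mul_zero, add_zero, log_one, sub_zero]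
  field_simp

lemma compoundPow_inv_natCast (m : ℤ) (k : ℕ) {n : ℕ} (hn : n ≠ 0) :
    compoundPow m k (n : ℂ)⁻¹ = (1 + k * (n : ℂ)⁻¹) ^ ((n : ℤ) + m) := by
  have hbase : (1 + k * (n : ℂ)⁻¹) ≠ 0 := by
    rw [← ofReal_natCast, ← ofReal_natCast, ← ofReal_inv, ← ofReal_mul, ← ofReal_one,
      ← ofReal_add, ofReal_ne_zero]
    positivity
  rw [compoundPow_of_ne_zero _ _ (by simpa using hn), inv_inv, ← exp_log hbase, ← exp_int_mul,
    exp_log hbase]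
  push_cast
  ring_nf

lemma differentiableOn_compoundPow (a : ℂ) (k : ℕ) :
    DifferentiableOn ℂ (compoundPow a k) (slitDomain k) := by
  have hlog : DifferentiableOn ℂ (fun y => log (1 + k * y)) (slitDomain k) := fun x hx =>
    ((differentiableAt_id.const_mul _).const_add 1).clog hx |>.differentiableWithinAt
  have hdslope := (differentiableOn_dslope
    ((isOpen_slitDomain k).mem_nhds (zero_mem_slitDomain k))).2 hlog
  exact ((differentiableOn_const a).mul hlog |>.add hdslope).cexp

lemma tendsto_compoundPow_of_tendsto_log {a : ℂ} {k : ℕ} {x₀ Λ : ℂ} {l : Filter ℂ}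
    (hl : l ≤ 𝓝 x₀) (hx₀ : x₀ ≠ 0) (hlog : Tendsto (fun x => log (1 + k * x)) l (𝓝 Λ)) :
    Tendsto (compoundPow a k) l (𝓝 (exp ((a + x₀⁻¹) * Λ))) := by
  refine Tendsto.congr' ?_ ((tendsto_const_nhds.add ((tendsto_id.mono_left hl).inv₀ hx₀)).mul
    hlog).cexp
  filter_upwards [hl (eventually_ne_nhds hx₀)] with x hx
  exact (compoundPow_of_ne_zero a k hx).symm

lemma eval_mul_exp_eq_of_eqOn_zero {d : ℕ} (hd : d ≠ 0) {R : ℕ → ℂ[X]} {a : ℂ}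
    (hG : Set.EqOn (fun x => ∑ k ∈ range (d + 1), (R k).eval x * compoundPow a k x) 0
      (slitDomain d))
    {x₀ : ℂ} (hx₀ : x₀ ≠ 0) (hlower : ∀ k < d, x₀ ∈ slitDomain k) {s : Set ℂ} {Λ : ℂ}
    (hs : s ⊆ {x | x.im ≠ 0}) (hne : (𝓝[s] x₀).NeBot)
    (hlog : Tendsto (fun x => log (1 + d * x)) (𝓝[s] x₀) (𝓝 Λ)) :
    (R d).eval x₀ * exp ((a + x₀⁻¹) * Λ) =
      -∑ k ∈ range d, (R k).eval x₀ * compoundPow a k x₀ := by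
  have hzero : Tendsto (fun x => ∑ k ∈ range (d + 1), (R k).eval x * compoundPow a k x)
      (𝓝[s] x₀) (𝓝 0) :=
    tendsto_const_nhds.congr' <| eventually_nhdsWithin_of_forall fun x hx =>
      (hG (setOf_im_ne_zero_subset_slitDomain hd (hs hx))).symm
  have hsum : Tendsto (fun x => ∑ k ∈ range d, (R k).eval x * compoundPow a k x) (𝓝[s] x₀)
      (𝓝 (∑ k ∈ range d, (R k).eval x₀ * compoundPow a k x₀)) := by
    refine tendsto_nhdsWithin_of_tendsto_nhds (tendsto_finsetSum _ fun k hk => ?_)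
    exact (R k).continuousAt.tendsto.mul ((differentiableOn_compoundPow a k).continuousOn
      |>.continuousAt ((isOpen_slitDomain k).mem_nhds (hlower k (mem_range.1 hk))))
  have htop := ((R d).continuousAt.tendsto.mono_left nhdsWithin_le_nhds).mul
    (tendsto_compoundPow_of_tendsto_log (a := a) nhdsWithin_le_nhds hx₀ hlog)
  simp only [sum_range_succ] at hzero
  linear_combination tendsto_nhds_unique (hsum.add htop) hzero

/-- Across the branch cut of `log (1 + d x)` the top term of the sum jumps by the factor
`exp (2πi (a + 1 / x₀))`, while the lower terms are continuous at `x₀`. -/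
lemma eval_eq_zero_of_eqOn_zero {d : ℕ} (hd : d ≠ 0) {R : ℕ → ℂ[X]} {a : ℂ}
    (hG : Set.EqOn (fun x => ∑ k ∈ range (d + 1), (R k).eval x * compoundPow a k x) 0
      (slitDomain d))
    {x₀ : ℝ} (hneg : 1 + d * x₀ < 0) (hpos : ∀ k < d, 0 < 1 + k * x₀)
    (hint : ∀ z : ℤ, a + (x₀ : ℂ)⁻¹ ≠ z) : (R d).eval (x₀ : ℂ) = 0 := by
  have hw : ((1 + d * x₀ : ℝ) : ℂ) = 1 + d * x₀ := by push_cast; rfl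
  have hre : (1 + d * (x₀ : ℂ)).re < 0 := by rw [← hw, ofReal_re]; exact hneg
  have him : (1 + d * (x₀ : ℂ)).im = 0 := by rw [← hw, ofReal_im]
  have hx₀ : (x₀ : ℂ) ≠ 0 := by
    rintro h
    rw [ofReal_eq_zero] at h
    norm_num [h] at hneg
  have hlower : ∀ k < d, (x₀ : ℂ) ∈ slitDomain k := fun k hk =>
    mem_slitPlane_iff.2 (Or.inl (by simpa using hpos k hk))
  have hcont : Continuous fun x : ℂ => 1 + d * x := by fun_prop
  have hupper := eval_mul_exp_eq_of_eqOn_zero hd hG hx₀ hlower (s := {x | 0 < x.im})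
    (fun x (hx : 0 < x.im) => hx.ne') (mem_closure_iff_nhdsWithin_neBot.1 (by simp))
    ((tendsto_log_nhdsWithin_im_nonneg_of_re_neg_of_im_zero hre him).comp
      (hcont.continuousWithinAt.tendsto_nhdsWithin fun x (hx : 0 < x.im) =>
        show 0 ≤ (1 + d * x).im by simpa using mul_nonneg d.cast_nonneg hx.le))
  have hbelow := eval_mul_exp_eq_of_eqOn_zero hd hG hx₀ hlower (s := {x | x.im < 0})
    (fun x (hx : x.im < 0) => hx.ne) (mem_closure_iff_nhdsWithin_neBot.1 (by simp))
    ((tendsto_log_nhdsWithin_im_neg_of_re_neg_of_im_zero hre him).comp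
      (hcont.continuousWithinAt.tendsto_nhdsWithin fun x (hx : x.im < 0) =>
        show (1 + d * x).im < 0 by
          simpa using mul_neg_of_pos_of_neg (Nat.cast_pos.2 (Nat.pos_of_ne_zero hd)) hx))
  by_contra hR
  obtain ⟨z, hz⟩ := exp_eq_exp_iff_exists_int.1 (mul_left_cancel₀ hR (hupper.trans hbelow.symm))
  refine hint z (mul_right_cancel₀ two_pi_I_ne_zero ?_)
  linear_combination hz

lemma tendsto_inv_natCast_nhdsNE_zero {𝕜 : Type*} [DivisionSemiring 𝕜] [CharZero 𝕜]
    [TopologicalSpace 𝕜] [ContinuousSMul ℚ≥0 𝕜] :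
    Tendsto (fun n : ℕ => (n : 𝕜)⁻¹) atTop (𝓝[≠] 0) :=
  tendsto_nhdsWithin_iff.2 ⟨tendsto_inv_atTop_nhds_zero_nat,
    (eventually_ne_atTop 0).mono fun n hn => by simpa using hn⟩

lemma eqOn_zero_of_frequently_sum_eval_inv_mul_zpow {d : ℕ} (R : ℕ → ℂ[X]) (m : ℤ)
    (h : ∃ᶠ n : ℕ in atTop,
      ∑ k ∈ range (d + 1), (R k).eval (n : ℂ)⁻¹ * (1 + k * (n : ℂ)⁻¹) ^ ((n : ℤ) + m) = 0) :
    Set.EqOn (fun x => ∑ k ∈ range (d + 1), (R k).eval x * compoundPow m k x) 0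
      (slitDomain d) := by
  refine AnalyticOnNhd.eqOn_zero_of_preconnected_of_frequently_eq_zero ?_
    (isPreconnected_slitDomain d) (zero_mem_slitDomain d)
    (tendsto_inv_natCast_nhdsNE_zero.frequently (h.mp ?_))
  · refine DifferentiableOn.analyticOnNhd (fun x hx => ?_) (isOpen_slitDomain d)
    refine DifferentiableWithinAt.fun_sum fun k hk => ?_
    exact (R k).differentiableAt.differentiableWithinAt.mul
      ((differentiableOn_compoundPow _ k).mono
        (antitone_slitDomain (mem_range_succ_iff.1 hk)) x hx)
  · filter_upwards [eventually_ne_atTop 0] with n hn hsum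
    simpa only [compoundPow_inv_natCast m _ hn] using hsum

theorem eq_zero_of_frequently_sum_eval_inv_mul_zpow {d : ℕ} (R : ℕ → ℂ[X]) (m : ℤ)
    (h : ∃ᶠ n : ℕ in atTop,
      ∑ k ∈ range (d + 1), (R k).eval (n : ℂ)⁻¹ * (1 + k * (n : ℂ)⁻¹) ^ ((n : ℤ) + m) = 0) :
    R d = 0 := by
  have hG := eqOn_zero_of_frequently_sum_eval_inv_mul_zpow R m h
  rcases eq_or_ne d 0 with rfl | hd
  · refine Polynomial.funext fun x => ?_
    have hx := hG (x := x) (by simp [slitDomain, one_mem_slitPlane])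
    simpa [compoundPow, exp_ne_zero] using hx
  refine eq_zero_of_infinite_isRoot _ (Set.Infinite.mono ?_
    ((Set.Ioo_infinite (zero_lt_one' ℝ)).image (f := fun s : ℝ => (((s - d)⁻¹ : ℝ) : ℂ)) ?_))
  · rintro _ ⟨s, ⟨hs0, hs1⟩, rfl⟩
    have hd1 : (1 : ℝ) ≤ d := by exact_mod_cast Nat.one_le_iff_ne_zero.2 hd
    have hsd : s - d < 0 := by linarith
    refine eval_eq_zero_of_eqOn_zero hd hG ?_ (fun k hk => ?_) (fun z hz => ?_)
    · have : 1 + d * (s - d)⁻¹ = s * (s - d)⁻¹ := by field_simp [hsd.ne]; ring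
      rw [this]
      exact mul_neg_of_pos_of_neg hs0 (inv_lt_zero.2 hsd)
    · have hkd : (k : ℝ) + 1 ≤ d := by exact_mod_cast hk
      have : 1 + k * (s - d)⁻¹ = (s - d + k) * (s - d)⁻¹ := by field_simp [hsd.ne]
      rw [this]
      exact mul_pos_of_neg_of_neg (by linarith) (inv_lt_zero.2 hsd)
    · have hz' : (s : ℝ) = ((z - m + d : ℤ) : ℝ) := by
        rw [ofReal_inv, inv_inv] at hz
        push_cast
        linear_combination (by exact_mod_cast hz : (m : ℝ) + (s - d) = z)
      have h0 : (0 : ℝ) < ((z - m + d : ℤ) : ℝ) := hz' ▸ hs0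
      have h1 : ((z - m + d : ℤ) : ℝ) < 1 := hz' ▸ hs1
      norm_cast at h0 h1
      omega
  · intro s _ t _ hst
    simpa using hst

lemma eval_reflect_inv_mul_pow {K : Type*} [Field K] {x : K} (hx : x ≠ 0) {N : ℕ} {p : K[X]}
    (hp : p.natDegree ≤ N) : (reflect N p).eval x⁻¹ * x ^ N = p.eval x := by
  let := invertibleOfNonzero hx
  simpa [eval₂_eq_eval_map, invOf_eq_inv] using eval₂_reflect_mul_pow (RingHom.id K) x N p hp

theorem eq_zero_of_frequently_sum_eval_mul_add_zpow {d : ℕ} (P : ℕ → ℂ[X]) (m : ℤ)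
    (h : ∃ᶠ n : ℕ in atTop,
      ∑ k ∈ range (d + 1), (P k).eval (n : ℂ) * ((n : ℂ) + k) ^ ((n : ℤ) + m) = 0) :
    P d = 0 := by
  set N := (range (d + 1)).sup fun k => (P k).natDegree
  have hN : ∀ k ∈ range (d + 1), (P k).natDegree ≤ N := fun k hk =>
    le_sup (f := fun k => (P k).natDegree) hk
  rw [← reflect_eq_zero_iff (N := N)]
  refine eq_zero_of_frequently_sum_eval_inv_mul_zpow (fun k => reflect N (P k)) m (h.mp ?_)
  filter_upwards [eventually_ne_atTop 0] with n hn hsum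
  have hn' : (n : ℂ) ≠ 0 := by exact_mod_cast hn
  have hscale : (n : ℂ) ^ N * (n : ℂ) ^ ((n : ℤ) + m) * ∑ k ∈ range (d + 1),
      (reflect N (P k)).eval (n : ℂ)⁻¹ * (1 + k * (n : ℂ)⁻¹) ^ ((n : ℤ) + m) = 0 := by
    rw [← hsum, mul_sum]
    refine sum_congr rfl fun k hk => ?_
    rw [← eval_reflect_inv_mul_pow hn' (hN k hk),
      show (n : ℂ) + k = n * (1 + k * (n : ℂ)⁻¹) by field_simp, mul_zpow]
    ring
  exact (mul_eq_zero.1 hscale).resolve_left (mul_ne_zero (pow_ne_zero _ hn') (zpow_ne_zero _ hn'))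

theorem not_holonomicSeq_zpow_self_add (c : ℤ) :
    ¬ HolonomicSeq fun n => (n : ℂ) ^ ((n : ℤ) + c) := by
  rintro ⟨d, p, hp0, hrec⟩
  have hP := eq_zero_of_frequently_sum_eval_mul_add_zpow (d := d)
    (fun k => p (d - k) * (X + C (k : ℂ)) ^ k) c <|
      (eventually_ne_atTop 0).frequently.mp <| Eventually.of_forall fun n hn => ?_
  · simp only [Nat.sub_self] at hP
    exact hp0 ((mul_eq_zero.1 hP).resolve_right (pow_ne_zero _ (X_add_C_ne_zero _)))
  rw [← hrec n, ← sum_range_reflect]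
  refine sum_congr rfl fun k hk => ?_
  rw [add_tsub_cancel_right, Nat.sub_sub_self (mem_range_succ_iff.1 hk)]
  generalize d - k = j
  have hne : (n : ℂ) + j ≠ 0 := by exact_mod_cast (Nat.add_pos_left (Nat.pos_of_ne_zero hn) j).ne'
  rw [eval_mul, eval_pow, eval_add, eval_X, eval_C, mul_assoc, ← zpow_natCast, ← zpow_add₀ hne]
  push_cast
  ring_nf

/-- The coefficient sequence `n^{n-1}/n!` of the Cayley tree function
`T(z) = ∑_{n≥1} n^{n-1} z^n/n!` is not holonomic, and neither is `n^n`. -/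
theorem cayley_not_holonomic :
    ¬ HolonomicSeq (fun n : ℕ =>
        if n = 0 then 0 else (n : ℂ) ^ (n - 1) / (n.factorial : ℂ)) ∧
    ¬ HolonomicSeq (fun n : ℕ => (n : ℂ) ^ n) := by
  refine ⟨fun h => not_holonomicSeq_zpow_self_add (-1) ?_, by
    simpa using not_holonomicSeq_zpow_self_add 0⟩
  refine (h.mul_of_apply_succ (u := fun n => (n.factorial : ℂ)) (X + 1) fun n => ?_)
    |>.of_eventuallyEq ?_
  · simp [Nat.factorial_succ]
  · filter_upwards [eventually_ne_atTop 0] with n hn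
    obtain ⟨k, rfl⟩ := Nat.exists_eq_succ_of_ne_zero hn
    simp [mul_div_cancel₀, Nat.factorial_ne_zero]
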